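/- arXiv:1806.04821 — 5 statements merged into one kernel-verified Lean document; each statement's English description precedes it below -/
import Mathlib

section
/- If φ : ℝ → ℂ is a classical (C²) nontrivial solution of φ'' - φ + 2|φ|²φ + iαφ = 0 on a periodic interval [-T,T] with α ≠ 0 real, then a contradiction follows; i.e., the equation has no nontrivial periodic classical solutions. -/
/-!
Multiply the equation by `conj φ`: since `φ' * conj φ'` is real, the derivative of
`Im (φ' * conj φ)` is `Im (φ'' * conj φ) = -α |φ|²`. The left side is periodic, so integrating
over one period gives `α ∫ |φ|² = 0`, which forces `φ = 0` when `α ≠ 0`.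
-/

open Complex ComplexConjugate Function intervalIntegral

lemma Function.Periodic.deriv {𝕜 F : Type*} [NontriviallyNormedField 𝕜] [NormedAddCommGroup F]
    [NormedSpace 𝕜 F] {f : 𝕜 → F} {c : 𝕜} (hf : Periodic f c) : Periodic (deriv f) c := fun x => by
  rw [← deriv_comp_add_const, hf.funext]

lemma integral_eq_zero_of_hasDerivAt_of_periodic {F f : ℝ → ℝ} {c : ℝ} (hF : Periodic F c)
    (hderiv : ∀ x, HasDerivAt F (f x) x) (hf : Continuous f) (a : ℝ) :
    ∫ x in a..a + c, f x = 0 := by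
  rw [integral_eq_sub_of_hasDerivAt (fun x _ => hderiv x) (hf.intervalIntegrable _ _), hF a,
    sub_self]

lemma hasDerivAt_im_deriv_mul_conj {φ : ℝ → ℂ} (hφ : Differentiable ℝ φ)
    (hφ' : Differentiable ℝ (deriv φ)) (x : ℝ) :
    HasDerivAt (fun y => (deriv φ y * conj (φ y)).im) (deriv (deriv φ) x * conj (φ x)).im x := by
  have hprod := (hφ' x).hasDerivAt.mul (hφ x).hasDerivAt.star
  refine (imCLM.hasFDerivAt.comp_hasDerivAt x hprod).congr_deriv ?_
  simp only [imCLM_apply, add_im, star_def, mul_conj, ofReal_im, add_zero]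

lemma im_mul_conj_eq_of_steady_state {w z : ℂ} {α : ℝ}
    (h : w - z + 2 * ((‖z‖ : ℝ) : ℂ) ^ 2 * z + I * α * z = 0) :
    (w * conj z).im = -(α * normSq z) := by
  rw [show w = z - 2 * ((‖z‖ : ℝ) : ℂ) ^ 2 * z - I * α * z by linear_combination h]
  simp only [sub_mul, mul_assoc, mul_conj, ← ofReal_pow, ← ofReal_mul, sub_im, mul_im, ofReal_re,
    ofReal_im, I_re, I_im, re_ofNat, im_ofNat]
  ring

theorem no_nontrivial_steady_state (T α : ℝ) (hT : 0 < T) (hα : α ≠ 0) (φ : ℝ → ℂ)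
    (hC2 : ContDiff ℝ 2 φ)
    (hper : ∀ x, φ (x + 2*T) = φ x)
    (heq : ∀ x, deriv (deriv φ) x - φ x + 2 * ((‖φ x‖ : ℝ) : ℂ)^2 * φ x
      + Complex.I * (α : ℂ) * φ x = 0) :
    φ = 0 := by
  have hφ : Differentiable ℝ φ := hC2.differentiable two_ne_zero
  have hφ' : Differentiable ℝ (deriv φ) :=
    (hC2.iterate_deriv' 1 1).differentiable one_ne_zero
  have hperiodic : Periodic φ (2 * T) := hper
  have hF : Periodic (fun y => (deriv φ y * conj (φ y)).im) (2 * T) := fun x => by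
    simp only [hperiodic.deriv x, hperiodic x]
  have hnormSq : Continuous fun x => normSq (φ x) := continuous_normSq.comp hC2.continuous
  by_contra hne
  obtain ⟨x₀, hx₀⟩ := Function.ne_iff.mp hne
  have hzero : ∫ x in x₀..x₀ + 2 * T, -(α * normSq (φ x)) = 0 :=
    integral_eq_zero_of_hasDerivAt_of_periodic (f := fun x => -(α * normSq (φ x))) hF
      (fun x => im_mul_conj_eq_of_steady_state (heq x) ▸ hasDerivAt_im_deriv_mul_conj hφ hφ' x)
      (continuous_const.mul hnormSq).neg x₀
  have hpos : 0 < ∫ x in x₀..x₀ + 2 * T, normSq (φ x) :=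
    integral_pos (by linarith) hnormSq.continuousOn (fun x _ => normSq_nonneg _)
      ⟨x₀, Set.left_mem_Icc.mpr (by linarith), normSq_pos.mpr hx₀⟩
  rw [integral_neg, integral_const_mul, neg_eq_zero] at hzero
  exact hpos.ne' ((mul_eq_zero.mp hzero).resolve_left hα)
end

section
/- For all κ ∈ (0,1), E(κ)² - (1-κ²)K(κ)² > 0, where K and E are the complete elliptic integrals of the first and second kind. -/
/-!
Write `Δ(θ) = √(1 - κ² sin² θ)`. The reflection `θ ↦ π/2 - θ` turns `√(1 - κ²) K` into
`∫ √(1 - κ²) / Δ(π/2 - θ)`, and `Δ(θ)² Δ(π/2 - θ)² = (1 - κ²) + κ⁴ sin² θ cos² θ > 1 - κ²` on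
`(0, π/2)`, so the integrand `Δ(θ)` of `E` strictly dominates it pointwise. Hence
`E > √(1 - κ²) K ≥ 0`, and squaring gives the claim.
-/

open Real Set intervalIntegral

lemma one_sub_sq_mul_sq_pos {κ x : ℝ} (hκ : κ ^ 2 < 1) (hx : x ^ 2 ≤ 1) :
    0 < 1 - κ ^ 2 * x ^ 2 := by
  nlinarith [sq_nonneg κ]

lemma sqrt_one_sub_sq_lt_sqrt_mul_sqrt {κ θ : ℝ} (hκ0 : κ ≠ 0) (hκ1 : κ ^ 2 ≤ 1)
    (hθ : θ ∈ Ioo 0 (π / 2)) :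
    √(1 - κ ^ 2) < √(1 - κ ^ 2 * sin θ ^ 2) * √(1 - κ ^ 2 * cos θ ^ 2) := by
  have hsin : 0 < sin θ := sin_pos_of_pos_of_lt_pi hθ.1 (by linarith [hθ.2, pi_pos])
  have hcos : 0 < cos θ := cos_pos_of_mem_Ioo ⟨by linarith [hθ.1, pi_pos], hθ.2⟩
  have hprod : (1 - κ ^ 2 * sin θ ^ 2) * (1 - κ ^ 2 * cos θ ^ 2)
      = 1 - κ ^ 2 + (κ ^ 2 * sin θ * cos θ) ^ 2 := by
    linear_combination (-κ ^ 2) * sin_sq_add_cos_sq θ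
  rw [← sqrt_mul (by nlinarith [sin_sq_le_one θ]), hprod]
  exact sqrt_lt_sqrt (by linarith) (lt_add_of_pos_right _ (by positivity))

lemma integral_comp_pi_div_two_sub (f : ℝ → ℝ) :
    ∫ θ in (0 : ℝ)..π / 2, f (π / 2 - θ) = ∫ θ in (0 : ℝ)..π / 2, f θ := by
  simp [integral_comp_sub_left]

lemma sqrt_one_sub_sq_mul_integral_inv_lt_integral {κ : ℝ} (hκ0 : κ ≠ 0) (hκ1 : κ ^ 2 < 1) :
    √(1 - κ ^ 2) * ∫ θ in (0 : ℝ)..π / 2, 1 / √(1 - κ ^ 2 * sin θ ^ 2)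
      < ∫ θ in (0 : ℝ)..π / 2, √(1 - κ ^ 2 * sin θ ^ 2) := by
  have hcos_pos (θ : ℝ) : 0 < √(1 - κ ^ 2 * cos θ ^ 2) :=
    sqrt_pos.2 (one_sub_sq_mul_sq_pos hκ1 (cos_sq_le_one θ))
  have hK : √(1 - κ ^ 2) * ∫ θ in (0 : ℝ)..π / 2, 1 / √(1 - κ ^ 2 * sin θ ^ 2)
      = ∫ θ in (0 : ℝ)..π / 2, √(1 - κ ^ 2) / √(1 - κ ^ 2 * cos θ ^ 2) := by
    rw [← integral_const_mul, ← integral_comp_pi_div_two_sub]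
    simp only [sin_pi_div_two_sub, mul_one_div]
  have hcont : Continuous fun θ =>
      √(1 - κ ^ 2 * sin θ ^ 2) - √(1 - κ ^ 2) / √(1 - κ ^ 2 * cos θ ^ 2) := by
    fun_prop (disch := exact fun θ => (hcos_pos θ).ne')
  rw [hK, ← sub_pos, ← integral_sub]
  · refine intervalIntegral_pos_of_pos_on (hcont.intervalIntegrable _ _) (fun θ hθ => ?_)
      (by positivity)
    rw [sub_pos, div_lt_iff₀ (hcos_pos θ)]
    exact sqrt_one_sub_sq_lt_sqrt_mul_sqrt hκ0 hκ1.le hθ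
  · exact (by fun_prop : Continuous _).intervalIntegrable _ _
  · exact (continuous_const.div (by fun_prop) fun θ => (hcos_pos θ).ne').intervalIntegrable _ _

theorem elliptic_ineq_one (κ : ℝ) (hκ : κ ∈ Set.Ioo (0:ℝ) 1) :
    0 < (∫ θ in (0:ℝ)..(Real.pi/2), Real.sqrt (1 - κ^2 * Real.sin θ^2))^2
      - (1 - κ^2) * (∫ θ in (0:ℝ)..(Real.pi/2), 1 / Real.sqrt (1 - κ^2 * Real.sin θ^2))^2 := by
  obtain ⟨hκ0, hκ1⟩ := hκ
  have hκ_sq : κ ^ 2 < 1 := by nlinarith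
  have hK_nonneg : 0 ≤ ∫ θ in (0:ℝ)..(π / 2), 1 / √(1 - κ ^ 2 * sin θ ^ 2) :=
    integral_nonneg (by positivity) fun θ _ => by positivity
  have hlt := pow_lt_pow_left₀ (sqrt_one_sub_sq_mul_integral_inv_lt_integral hκ0.ne' hκ_sq)
    (by positivity) two_ne_zero
  rwa [mul_pow, sq_sqrt (by linarith), ← sub_pos] at hlt
end

section
/- For all κ ∈ (0,1), 2(1-κ²)K(κ) - (2-κ²)E(κ) < 0. -/
/-!
With `m = κ²` and `Δ(θ) = √(1 - m sin² θ)`, the integrands satisfy the pointwise identity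
`2(1-m)/Δ - (2-m)Δ = -m (sin θ cos θ / Δ)' - m²(1-m) sin⁴ θ / Δ³`.
The derivative term integrates to zero over `[0, π/2]`, so
`2(1-m)K - (2-m)E = -m²(1-m) ∫ sin⁴ θ / Δ³ < 0`.
-/

open Real intervalIntegral

section
variable {m : ℝ}

lemma one_sub_mul_sin_sq_pos (hm : m < 1) (θ : ℝ) : 0 < 1 - m * sin θ ^ 2 := by
  rcases le_or_gt m 0 with h | h <;> nlinarith [sin_sq_le_one θ, sq_nonneg (sin θ)]

lemma sqrt_one_sub_mul_sin_sq_pos (hm : m < 1) (θ : ℝ) : 0 < √(1 - m * sin θ ^ 2) :=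
  sqrt_pos.2 (one_sub_mul_sin_sq_pos hm θ)

lemma hasDerivAt_sin_mul_cos_div_sqrt (hm : m < 1) (θ : ℝ) :
    HasDerivAt (fun t => sin t * cos t / √(1 - m * sin t ^ 2))
      ((1 - 2 * sin θ ^ 2 + m * sin θ ^ 4) / √(1 - m * sin θ ^ 2) ^ 3) θ := by
  have hpos := one_sub_mul_sin_sq_pos hm θ
  have hu : √(1 - m * sin θ ^ 2) ≠ 0 := (sqrt_one_sub_mul_sin_sq_pos hm θ).ne'
  have hD := ((hasDerivAt_sin θ).mul (hasDerivAt_cos θ)).div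
    (((((hasDerivAt_sin θ).pow 2).const_mul m).const_sub 1).sqrt hpos.ne') hu
  refine hD.congr_deriv ?_
  have hsq : √(1 - m * sin θ ^ 2) ^ 2 = 1 - m * sin θ ^ 2 := sq_sqrt hpos.le
  have hcos : cos θ ^ 2 = 1 - sin θ ^ 2 := cos_sq' θ
  simp only [Pi.mul_apply, Pi.pow_apply, Nat.cast_ofNat]
  set u := √(1 - m * sin θ ^ 2)
  field_simp
  linear_combination (cos θ ^ 2 - sin θ ^ 2) * hsq + hcos

lemma integral_deriv_sin_mul_cos_div_sqrt (hm : m < 1) :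
    ∫ θ in (0)..(π / 2), (1 - 2 * sin θ ^ 2 + m * sin θ ^ 4) / √(1 - m * sin θ ^ 2) ^ 3
      = 0 := by
  have hu θ : √(1 - m * sin θ ^ 2) ^ 3 ≠ 0 :=
    (pow_pos (sqrt_one_sub_mul_sin_sq_pos hm θ) 3).ne'
  rw [integral_eq_sub_of_hasDerivAt (fun θ _ => hasDerivAt_sin_mul_cos_div_sqrt hm θ)
    (Continuous.intervalIntegrable (by fun_prop (disch := exact hu)) _ _)]
  simp

lemma two_mul_one_sub_div_sqrt_sub (hm : m < 1) (θ : ℝ) :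
    2 * (1 - m) * (1 / √(1 - m * sin θ ^ 2)) - (2 - m) * √(1 - m * sin θ ^ 2)
      = -(m * ((1 - 2 * sin θ ^ 2 + m * sin θ ^ 4) / √(1 - m * sin θ ^ 2) ^ 3)
          + m ^ 2 * (1 - m) * (sin θ ^ 4 / √(1 - m * sin θ ^ 2) ^ 3)) := by
  have hpos := one_sub_mul_sin_sq_pos hm θ
  have hu : √(1 - m * sin θ ^ 2) ≠ 0 := (sqrt_one_sub_mul_sin_sq_pos hm θ).ne'
  have hsq : √(1 - m * sin θ ^ 2) ^ 2 = 1 - m * sin θ ^ 2 := sq_sqrt hpos.le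
  set u := √(1 - m * sin θ ^ 2)
  field_simp
  linear_combination (2 * (1 - m) - (2 - m) * (u ^ 2 + 1 - m * sin θ ^ 2)) * hsq

lemma two_mul_one_sub_integral_sub (hm : m < 1) :
    2 * (1 - m) * (∫ θ in (0)..(π / 2), 1 / √(1 - m * sin θ ^ 2))
        - (2 - m) * (∫ θ in (0)..(π / 2), √(1 - m * sin θ ^ 2))
      = -(m ^ 2 * (1 - m) * ∫ θ in (0)..(π / 2), sin θ ^ 4 / √(1 - m * sin θ ^ 2) ^ 3) := by
  have hu θ : √(1 - m * sin θ ^ 2) ≠ 0 := (sqrt_one_sub_mul_sin_sq_pos hm θ).ne'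
  have hint {f : ℝ → ℝ} (hf : Continuous f) :
      IntervalIntegrable f MeasureTheory.volume 0 (π / 2) :=
    hf.intervalIntegrable _ _
  rw [← integral_const_mul, ← integral_const_mul,
    ← integral_sub (hint (by fun_prop (disch := exact hu))) (hint (by fun_prop)),
    integral_congr fun θ _ => two_mul_one_sub_div_sqrt_sub hm θ, integral_neg,
    integral_add (hint (by fun_prop (disch := exact fun θ => pow_ne_zero 3 (hu θ))))
      (hint (by fun_prop (disch := exact fun θ => pow_ne_zero 3 (hu θ)))),
    integral_const_mul, integral_const_mul, integral_deriv_sin_mul_cos_div_sqrt hm,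
    mul_zero, zero_add]

lemma integral_sin_pow_four_div_sqrt_pos (hm : m < 1) :
    0 < ∫ θ in (0)..(π / 2), sin θ ^ 4 / √(1 - m * sin θ ^ 2) ^ 3 := by
  have hu := sqrt_one_sub_mul_sin_sq_pos hm
  have hcont : Continuous fun θ => sin θ ^ 4 / √(1 - m * sin θ ^ 2) ^ 3 := by
    fun_prop (disch := exact fun θ => (pow_pos (hu θ) 3).ne')
  refine intervalIntegral_pos_of_pos_on (hcont.intervalIntegrable _ _)
    (fun θ hθ => div_pos (pow_pos ?_ 4) (pow_pos (hu θ) 3)) (by positivity)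
  exact sin_pos_of_pos_of_lt_pi hθ.1 (hθ.2.trans (by linarith [pi_pos]))

end

theorem elliptic_ineq_two (κ : ℝ) (hκ : κ ∈ Set.Ioo (0:ℝ) 1) :
    2*(1-κ^2) * (∫ θ in (0:ℝ)..(Real.pi/2), 1 / Real.sqrt (1 - κ^2 * Real.sin θ^2))
      - (2-κ^2) * (∫ θ in (0:ℝ)..(Real.pi/2), Real.sqrt (1 - κ^2 * Real.sin θ^2)) < 0 := by
  obtain ⟨hκ0, hκ1⟩ := hκ
  have hm : κ ^ 2 < 1 := by nlinarith
  rw [two_mul_one_sub_integral_sub hm, neg_neg_iff_pos]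
  exact mul_pos (mul_pos (by positivity) (sub_pos.2 hm)) (integral_sin_pow_four_div_sqrt_pos hm)
end

section
/- For all κ ∈ (0,1), 2K(κ) - ((2-κ²)/(1-κ²))E(κ) < 0. -/
/-!
Multiplying by `1 - κ²`, the claim is `2(1 - κ²) K < (2 - κ²) E`. Pointwise,
`(2 - κ²) Δ - 2(1 - κ²)/Δ = κ² (sin θ cos θ / Δ)' + κ⁴ (1 - κ²) sin⁴ θ / Δ³`,
and the derivative term integrates to zero over `[0, π/2]` because `sin θ cos θ` vanishes at
both ends. Hence `(2 - κ²) E - 2(1 - κ²) K = κ⁴ (1 - κ²) ∫ sin⁴ θ / Δ³ > 0`.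
-/

open Real intervalIntegral

namespace EllipticIntegral

noncomputable def deltaAmplitude (κ θ : ℝ) : ℝ := √(1 - κ ^ 2 * sin θ ^ 2)

local notation "Δ" => deltaAmplitude

noncomputable def K (κ : ℝ) : ℝ := ∫ θ in (0 : ℝ)..π / 2, 1 / Δ κ θ

noncomputable def E (κ : ℝ) : ℝ := ∫ θ in (0 : ℝ)..π / 2, Δ κ θ

variable {κ : ℝ}

lemma one_sub_sq_mul_sin_sq_pos (hκ : κ ^ 2 < 1) (θ : ℝ) : 0 < 1 - κ ^ 2 * sin θ ^ 2 := by
  nlinarith [sin_sq_le_one θ, sq_nonneg κ]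

lemma deltaAmplitude_pos (hκ : κ ^ 2 < 1) (θ : ℝ) : 0 < Δ κ θ :=
  sqrt_pos.mpr (one_sub_sq_mul_sin_sq_pos hκ θ)

lemma deltaAmplitude_sq (hκ : κ ^ 2 < 1) (θ : ℝ) : Δ κ θ ^ 2 = 1 - κ ^ 2 * sin θ ^ 2 :=
  sq_sqrt (one_sub_sq_mul_sin_sq_pos hκ θ).le

@[fun_prop]
lemma continuous_deltaAmplitude : Continuous (Δ κ) := by
  unfold deltaAmplitude; fun_prop

lemma continuous_div_deltaAmplitude_pow (hκ : κ ^ 2 < 1) {f : ℝ → ℝ} (hf : Continuous f)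
    (n : ℕ) : Continuous fun θ => f θ / Δ κ θ ^ n :=
  hf.div (by fun_prop) fun θ => pow_ne_zero n (deltaAmplitude_pos hκ θ).ne'

lemma hasDerivAt_deltaAmplitude (hκ : κ ^ 2 < 1) (θ : ℝ) :
    HasDerivAt (Δ κ) (-(κ ^ 2 * sin θ * cos θ) / Δ κ θ) θ := by
  have hu : HasDerivAt (fun θ => 1 - κ ^ 2 * sin θ ^ 2) (-(κ ^ 2 * (2 * sin θ * cos θ))) θ := by
    simpa using ((hasDerivAt_sin θ).pow 2 |>.const_mul (κ ^ 2)).const_sub 1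
  refine (hu.sqrt (one_sub_sq_mul_sin_sq_pos hκ θ).ne').congr_deriv ?_
  rw [deltaAmplitude]
  field_simp

lemma hasDerivAt_sin_mul_cos_div_deltaAmplitude (hκ : κ ^ 2 < 1) (θ : ℝ) :
    HasDerivAt (fun θ => sin θ * cos θ / Δ κ θ)
      ((1 - 2 * sin θ ^ 2 + κ ^ 2 * sin θ ^ 4) / Δ κ θ ^ 3) θ := by
  refine (((hasDerivAt_sin θ).mul (hasDerivAt_cos θ)).div (hasDerivAt_deltaAmplitude hκ θ)
    (deltaAmplitude_pos hκ θ).ne').congr_deriv ?_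
  have hΔ := (deltaAmplitude_pos hκ θ).ne'
  field_simp
  rw [deltaAmplitude_sq hκ, Pi.mul_apply]
  linear_combination sin_sq_add_cos_sq θ

lemma integral_deriv_sin_mul_cos_div_deltaAmplitude (hκ : κ ^ 2 < 1) :
    ∫ θ in (0 : ℝ)..π / 2, (1 - 2 * sin θ ^ 2 + κ ^ 2 * sin θ ^ 4) / Δ κ θ ^ 3 = 0 := by
  rw [integral_eq_sub_of_hasDerivAt (fun θ _ => hasDerivAt_sin_mul_cos_div_deltaAmplitude hκ θ)
    ((continuous_div_deltaAmplitude_pow hκ (by fun_prop) 3).intervalIntegrable _ _)]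
  simp

lemma two_sub_sq_mul_deltaAmplitude_sub (hκ : κ ^ 2 < 1) (θ : ℝ) :
    (2 - κ ^ 2) * Δ κ θ - 2 * (1 - κ ^ 2) * (1 / Δ κ θ) =
      κ ^ 2 * ((1 - 2 * sin θ ^ 2 + κ ^ 2 * sin θ ^ 4) / Δ κ θ ^ 3)
        + κ ^ 4 * (1 - κ ^ 2) * (sin θ ^ 4 / Δ κ θ ^ 3) := by
  have hΔ := (deltaAmplitude_pos hκ θ).ne'
  field_simp
  rw [deltaAmplitude_sq hκ]
  ring

lemma integral_sin_pow_four_div_deltaAmplitude_pow_three_pos (hκ : κ ^ 2 < 1) :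
    0 < ∫ θ in (0 : ℝ)..π / 2, sin θ ^ 4 / Δ κ θ ^ 3 := by
  refine intervalIntegral_pos_of_pos_on
    ((continuous_div_deltaAmplitude_pow hκ (by fun_prop) 3).intervalIntegrable _ _)
    (fun θ hθ => ?_) (by positivity)
  have hsin : 0 < sin θ := sin_pos_of_pos_of_lt_pi hθ.1 (by linarith [hθ.2, pi_pos])
  have hΔ := deltaAmplitude_pos hκ θ
  positivity

lemma two_sub_sq_mul_E_sub_two_mul_K (hκ : κ ^ 2 < 1) :
    (2 - κ ^ 2) * E κ - 2 * (1 - κ ^ 2) * K κ =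
      κ ^ 4 * (1 - κ ^ 2) * ∫ θ in (0 : ℝ)..π / 2, sin θ ^ 4 / Δ κ θ ^ 3 := by
  have hint {f : ℝ → ℝ} (hf : Continuous f) (n : ℕ) (c : ℝ) :
      IntervalIntegrable (fun θ => c * (f θ / Δ κ θ ^ n)) MeasureTheory.volume 0 (π / 2) :=
    ((continuous_div_deltaAmplitude_pow hκ hf n).intervalIntegrable _ _).const_mul c
  have hE : IntervalIntegrable (fun θ => (2 - κ ^ 2) * Δ κ θ) MeasureTheory.volume 0 (π / 2) :=
    (continuous_deltaAmplitude.intervalIntegrable _ _).const_mul _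
  rw [E, K, ← integral_const_mul, ← integral_const_mul,
    ← integral_sub hE
      (by simpa using hint (f := fun _ => 1) continuous_const 1 (2 * (1 - κ ^ 2))),
    integral_congr fun θ _ => two_sub_sq_mul_deltaAmplitude_sub hκ θ,
    integral_add (hint (by fun_prop) 3 _) (hint (by fun_prop) 3 _),
    integral_const_mul, integral_const_mul, integral_deriv_sin_mul_cos_div_deltaAmplitude hκ]
  ring

lemma two_mul_one_sub_sq_mul_K_lt (hκ₀ : κ ≠ 0) (hκ : κ ^ 2 < 1) :
    2 * (1 - κ ^ 2) * K κ < (2 - κ ^ 2) * E κ := by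
  have hcoeff : 0 < κ ^ 4 * (1 - κ ^ 2) := mul_pos (by positivity) (by linarith)
  have hrem := integral_sin_pow_four_div_deltaAmplitude_pow_three_pos hκ
  have hdiff := two_sub_sq_mul_E_sub_two_mul_K hκ
  nlinarith

end EllipticIntegral

open EllipticIntegral in
theorem elliptic_ineq_three (κ : ℝ) (hκ : κ ∈ Set.Ioo (0:ℝ) 1) :
    2 * (∫ θ in (0:ℝ)..(Real.pi/2), 1 / Real.sqrt (1 - κ^2 * Real.sin θ^2))
      - ((2-κ^2)/(1-κ^2)) * (∫ θ in (0:ℝ)..(Real.pi/2), Real.sqrt (1 - κ^2 * Real.sin θ^2)) < 0 := by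
  obtain ⟨hκ₀, hκ₁⟩ := hκ
  have hκ : κ ^ 2 < 1 := by nlinarith
  change 2 * K κ - (2 - κ ^ 2) / (1 - κ ^ 2) * E κ < 0
  rw [sub_neg, div_mul_eq_mul_div, lt_div_iff₀ (by linarith), mul_right_comm]
  exact two_mul_one_sub_sq_mul_K_lt hκ₀.ne' hκ
end

section
/- For κ ∈ (0,1), the quantity (E(κ)² - (1-κ²)K(κ)²)/(2[2(1-κ²)K(κ) - (2-κ²)E(κ)]) is strictly negative. -/
/-!
Write `Δ θ = √(1 - κ² sin² θ)` and `k' = √(1 - κ²)`. Differentiating `κ² sin θ cos θ / Δ` gives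
`Δ - k'² / Δ³`, so `∫₀^{π/2} k'² / Δ³ = E`. The AM–GM inequality `2 k' / Δ ≤ k'² / Δ³ + Δ`, strict
at `θ = 0` (where `Δ = 1 ≠ k'`), therefore integrates to `k' K < E`, and the numerator is positive.

For the denominator,
`(2 - κ²) Δ - 2 k'² / Δ = κ² (cos² θ - k'² sin² θ) / Δ ≥ κ² (cos² θ - k' sin² θ)` because `k' ≤ Δ ≤ 1`,
and the right-hand side integrates to `κ² (1 - k') π / 4 > 0`.
-/

open Real intervalIntegral
open MeasureTheory (volume)

theorem sq_div_pow_three_add_sub_two_mul_div (c : ℝ) {u : ℝ} (hu : u ≠ 0) :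
    c ^ 2 / u ^ 3 + u - 2 * c / u = (u ^ 2 - c) ^ 2 / u ^ 3 := by
  field_simp
  ring

theorem integral_cos_sq_sub_mul_sin_sq (a : ℝ) :
    ∫ θ in (0:ℝ)..π / 2, (cos θ ^ 2 - a * sin θ ^ 2) = (1 - a) * (π / 4) := by
  rw [integral_sub ((by fun_prop : Continuous fun θ => cos θ ^ 2).intervalIntegrable _ _)
      ((by fun_prop : Continuous fun θ => a * sin θ ^ 2).intervalIntegrable _ _),
    integral_const_mul, integral_cos_sq, integral_sin_sq]
  simp
  ring

noncomputable def ellipticDelta (κ θ : ℝ) : ℝ := √(1 - κ ^ 2 * sin θ ^ 2)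

noncomputable def ellipticK (κ : ℝ) : ℝ := ∫ θ in (0:ℝ)..π / 2, 1 / ellipticDelta κ θ

noncomputable def ellipticE (κ : ℝ) : ℝ := ∫ θ in (0:ℝ)..π / 2, ellipticDelta κ θ

section

variable {κ : ℝ}

theorem continuous_ellipticDelta : Continuous (ellipticDelta κ) := by
  unfold ellipticDelta
  fun_prop

@[simp]
theorem ellipticDelta_zero : ellipticDelta κ 0 = 1 := by
  simp [ellipticDelta]

theorem ellipticDelta_le_one (θ : ℝ) : ellipticDelta κ θ ≤ 1 :=
  sqrt_le_one.mpr (by nlinarith [sq_nonneg κ, sq_nonneg (sin θ)])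

theorem sqrt_one_sub_sq_le_ellipticDelta (θ : ℝ) : √(1 - κ ^ 2) ≤ ellipticDelta κ θ :=
  sqrt_le_sqrt (by nlinarith [sq_nonneg κ, sin_sq_le_one θ])

theorem ellipticDelta_pos (hκ : κ ^ 2 < 1) (θ : ℝ) : 0 < ellipticDelta κ θ :=
  (sqrt_pos.2 (sub_pos.2 hκ)).trans_le (sqrt_one_sub_sq_le_ellipticDelta θ)

theorem ellipticDelta_sq (hκ : κ ^ 2 < 1) (θ : ℝ) :
    ellipticDelta κ θ ^ 2 = 1 - κ ^ 2 * sin θ ^ 2 :=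
  sq_sqrt (by nlinarith [sq_nonneg κ, sin_sq_le_one θ])

theorem continuous_div_ellipticDelta_pow (hκ : κ ^ 2 < 1) (c : ℝ) (n : ℕ) :
    Continuous fun θ => c / ellipticDelta κ θ ^ n :=
  continuous_const.div (continuous_ellipticDelta.pow n)
    fun θ => pow_ne_zero n (ellipticDelta_pos hκ θ).ne'

theorem continuous_div_ellipticDelta (hκ : κ ^ 2 < 1) (c : ℝ) :
    Continuous fun θ => c / ellipticDelta κ θ := by
  simpa using continuous_div_ellipticDelta_pow hκ c 1

theorem hasDerivAt_sq_mul_sin_mul_cos_div_ellipticDelta (hκ : κ ^ 2 < 1) (θ : ℝ) :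
    HasDerivAt (fun θ => κ ^ 2 * (sin θ * cos θ / ellipticDelta κ θ))
      (ellipticDelta κ θ - (1 - κ ^ 2) / ellipticDelta κ θ ^ 3) θ := by
  have hΔ := ellipticDelta_pos hκ θ
  have hΔsq := ellipticDelta_sq hκ θ
  have hradicand : HasDerivAt (fun θ => 1 - κ ^ 2 * sin θ ^ 2)
      (-(κ ^ 2 * (2 * sin θ * cos θ))) θ := by
    simpa using (((hasDerivAt_sin θ).pow 2).const_mul (κ ^ 2)).const_sub 1
  have hΔ' : HasDerivAt (ellipticDelta κ)
      (-(κ ^ 2 * (2 * sin θ * cos θ)) / (2 * ellipticDelta κ θ)) θ :=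
    hradicand.sqrt (hΔsq ▸ (pow_pos hΔ 2).ne')
  refine ((((hasDerivAt_sin θ).fun_mul (hasDerivAt_cos θ)).div hΔ' hΔ.ne').const_mul _
    ).congr_deriv ?_
  field_simp
  rw [cos_sq', show ellipticDelta κ θ ^ 4 = (ellipticDelta κ θ ^ 2) ^ 2 by ring, hΔsq]
  ring

theorem integral_one_sub_sq_div_ellipticDelta_pow_three (hκ : κ ^ 2 < 1) :
    ∫ θ in (0:ℝ)..π / 2, (1 - κ ^ 2) / ellipticDelta κ θ ^ 3 = ellipticE κ := by
  have hftc := integral_eq_sub_of_hasDerivAt (a := 0) (b := π / 2)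
    (fun θ _ => hasDerivAt_sq_mul_sin_mul_cos_div_ellipticDelta hκ θ)
    ((continuous_ellipticDelta.sub (continuous_div_ellipticDelta_pow hκ _ 3)).intervalIntegrable
      _ _)
  rw [integral_sub (continuous_ellipticDelta.intervalIntegrable _ _)
    ((continuous_div_ellipticDelta_pow hκ _ 3).intervalIntegrable _ _)] at hftc
  simp only [cos_pi_div_two, sin_zero, mul_zero, zero_mul, zero_div, sub_zero] at hftc
  exact (sub_eq_zero.1 hftc).symm

theorem sqrt_one_sub_sq_mul_ellipticK_lt_ellipticE (hκ0 : κ ≠ 0) (hκ : κ ^ 2 < 1) :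
    √(1 - κ ^ 2) * ellipticK κ < ellipticE κ := by
  set k' := √(1 - κ ^ 2)
  have hk'sq : k' ^ 2 = 1 - κ ^ 2 := sq_sqrt (sub_pos.2 hκ).le
  have hk'1 : k' ≠ 1 := fun h => hκ0 (by nlinarith [h ▸ hk'sq])
  have amgm (θ : ℝ) : (1 - κ ^ 2) / ellipticDelta κ θ ^ 3 + ellipticDelta κ θ
      - 2 * k' / ellipticDelta κ θ = (ellipticDelta κ θ ^ 2 - k') ^ 2 / ellipticDelta κ θ ^ 3 := by
    rw [← hk'sq]
    exact sq_div_pow_three_add_sub_two_mul_div k' (ellipticDelta_pos hκ θ).ne'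
  have hlt : ∫ θ in (0:ℝ)..π / 2, 2 * k' / ellipticDelta κ θ
      < ∫ θ in (0:ℝ)..π / 2, ((1 - κ ^ 2) / ellipticDelta κ θ ^ 3 + ellipticDelta κ θ) := by
    refine integral_lt_integral_of_continuousOn_of_le_of_exists_lt (by positivity)
      (continuous_div_ellipticDelta hκ _).continuousOn
      ((continuous_div_ellipticDelta_pow hκ _ 3).add continuous_ellipticDelta).continuousOn
      (fun θ _ => sub_nonneg.1 ?_) ⟨0, ⟨le_rfl, by positivity⟩, sub_pos.1 ?_⟩
    · have := ellipticDelta_pos hκ θ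
      rw [amgm]
      positivity
    · rw [amgm, ellipticDelta_zero, one_pow, one_pow, div_one]
      exact sq_pos_of_ne_zero (sub_ne_zero.2 hk'1.symm)
  rw [integral_add ((continuous_div_ellipticDelta_pow hκ _ 3).intervalIntegrable _ _)
    (continuous_ellipticDelta.intervalIntegrable _ _),
    integral_one_sub_sq_div_ellipticDelta_pow_three hκ, ← ellipticE] at hlt
  have hK : ∫ θ in (0:ℝ)..π / 2, 2 * k' / ellipticDelta κ θ = 2 * (k' * ellipticK κ) := by
    simp only [ellipticK, ← integral_const_mul]
    congr 1 with θ
    ring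
  linarith

theorem one_sub_sq_mul_ellipticK_sq_lt_ellipticE_sq (hκ0 : κ ≠ 0) (hκ : κ ^ 2 < 1) :
    (1 - κ ^ 2) * ellipticK κ ^ 2 < ellipticE κ ^ 2 := by
  have hK : 0 ≤ ellipticK κ :=
    integral_nonneg (by positivity) fun θ _ => (one_div_pos.2 (ellipticDelta_pos hκ θ)).le
  calc (1 - κ ^ 2) * ellipticK κ ^ 2 = (√(1 - κ ^ 2) * ellipticK κ) ^ 2 := by
        rw [mul_pow, sq_sqrt (sub_pos.2 hκ).le]
    _ < ellipticE κ ^ 2 := by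
        gcongr
        exact sqrt_one_sub_sq_mul_ellipticK_lt_ellipticE hκ0 hκ

theorem sq_mul_cos_sq_sub_sqrt_mul_sin_sq_le (hκ : κ ^ 2 < 1) (θ : ℝ) :
    κ ^ 2 * (cos θ ^ 2 - √(1 - κ ^ 2) * sin θ ^ 2)
      ≤ (2 - κ ^ 2) * ellipticDelta κ θ - 2 * (1 - κ ^ 2) * (1 / ellipticDelta κ θ) := by
  set Δ := ellipticDelta κ θ
  set k' := √(1 - κ ^ 2)
  have hΔ : 0 < Δ := ellipticDelta_pos hκ θ
  have hk'sq : k' ^ 2 = 1 - κ ^ 2 := sq_sqrt (sub_pos.2 hκ).le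
  have hrhs : (2 - κ ^ 2) * Δ - 2 * (1 - κ ^ 2) * (1 / Δ)
      = κ ^ 2 * (cos θ ^ 2 / Δ - k' ^ 2 * sin θ ^ 2 / Δ) := by
    field_simp
    rw [ellipticDelta_sq hκ, hk'sq, cos_sq']
    ring
  have hcos : cos θ ^ 2 ≤ cos θ ^ 2 / Δ :=
    le_div_self (sq_nonneg _) hΔ (ellipticDelta_le_one θ)
  have hsin : k' ^ 2 * sin θ ^ 2 / Δ ≤ k' * sin θ ^ 2 := by
    rw [div_le_iff₀ hΔ, show k' ^ 2 * sin θ ^ 2 = k' * sin θ ^ 2 * k' by ring]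
    exact mul_le_mul_of_nonneg_left (sqrt_one_sub_sq_le_ellipticDelta θ) (by positivity)
  rw [hrhs]
  gcongr

theorem two_mul_one_sub_sq_mul_ellipticK_sub_lt (hκ0 : κ ≠ 0) (hκ : κ ^ 2 < 1) :
    2 * (1 - κ ^ 2) * ellipticK κ - (2 - κ ^ 2) * ellipticE κ < 0 := by
  have hk' : √(1 - κ ^ 2) < 1 := (sqrt_lt' one_pos).2 (by nlinarith [sq_pos_of_ne_zero hκ0])
  have hE : IntervalIntegrable (fun θ => (2 - κ ^ 2) * ellipticDelta κ θ) volume 0 (π / 2) :=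
    (continuous_ellipticDelta.intervalIntegrable _ _).const_mul _
  have hK : IntervalIntegrable (fun θ => 2 * (1 - κ ^ 2) * (1 / ellipticDelta κ θ))
      volume 0 (π / 2) :=
    ((continuous_div_ellipticDelta hκ 1).intervalIntegrable _ _).const_mul _
  have hbound := integral_mono_on (a := 0) (b := π / 2) (by positivity)
    ((by fun_prop : Continuous fun θ => κ ^ 2 * (cos θ ^ 2 - √(1 - κ ^ 2) * sin θ ^ 2)
      ).intervalIntegrable _ _)
    (hE.sub hK) fun θ _ => sq_mul_cos_sq_sub_sqrt_mul_sin_sq_le hκ θ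
  rw [integral_const_mul, integral_cos_sq_sub_mul_sin_sq, integral_sub hE hK,
    integral_const_mul, integral_const_mul, ← ellipticE, ← ellipticK] at hbound
  have hpos : 0 < κ ^ 2 * ((1 - √(1 - κ ^ 2)) * (π / 4)) :=
    mul_pos (sq_pos_of_ne_zero hκ0) (mul_pos (sub_pos.2 hk') (by positivity))
  linarith

end

theorem elliptic_quotient_neg (κ : ℝ) (hκ : κ ∈ Set.Ioo (0:ℝ) 1) :
    ((∫ θ in (0:ℝ)..(Real.pi/2), Real.sqrt (1 - κ^2 * Real.sin θ^2))^2
        - (1-κ^2) * (∫ θ in (0:ℝ)..(Real.pi/2), 1 / Real.sqrt (1 - κ^2 * Real.sin θ^2))^2)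
      / (2 * (2*(1-κ^2) * (∫ θ in (0:ℝ)..(Real.pi/2), 1 / Real.sqrt (1 - κ^2 * Real.sin θ^2))
        - (2-κ^2) * (∫ θ in (0:ℝ)..(Real.pi/2), Real.sqrt (1 - κ^2 * Real.sin θ^2)))) < 0 := by
  obtain ⟨hκ0, hκ1⟩ := hκ
  have hκsq : κ ^ 2 < 1 := pow_lt_one₀ hκ0.le hκ1 two_ne_zero
  change (ellipticE κ ^ 2 - (1 - κ ^ 2) * ellipticK κ ^ 2)
    / (2 * (2 * (1 - κ ^ 2) * ellipticK κ - (2 - κ ^ 2) * ellipticE κ)) < 0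
  refine div_neg_of_pos_of_neg ?_ ?_
  · exact sub_pos.2 (one_sub_sq_mul_ellipticK_sq_lt_ellipticE_sq hκ0.ne' hκsq)
  · linarith [two_mul_one_sub_sq_mul_ellipticK_sub_lt hκ0.ne' hκsq]
end
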